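/- Let G be a finite group. Then the Tate homology group Ĥ_0(G; (I,2)) is isomorphic to G^{ab} ⊗_ℤ ℤ/2, via the map sending g ⊗ 1 to the class of g − 1. -/

import Mathlib

open TensorProduct

section Coinvariants
variable {G : Type*} [Group G] {V : Type*} [AddCommGroup V] [Module ℤ V]

/-- The norm map `v ↦ ∑ g • v` for a representation of a finite group. -/
noncomputable def normMap [Fintype G] (ρ : Representation ℤ G V) : V →ₗ[ℤ] V :=
  ∑ g : G, (ρ g : V →ₗ[ℤ] V)

/-- The submodule generated by the elements `g • v - v`, so that the quotient of `V` by it is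
the module of coinvariants `ℤ ⊗_{ℤG} V`. -/
def coinvRel (ρ : Representation ℤ G V) : Submodule ℤ V :=
  Submodule.span ℤ (Set.range fun p : G × V => ρ p.1 p.2 - p.2)

/-- The coinvariants `ℤ ⊗_{ℤG} V` of a representation. -/
abbrev Coinv (ρ : Representation ℤ G V) : Type _ := V ⧸ coinvRel ρ

lemma coinvRel_le [Fintype G] (ρ : Representation ℤ G V) :
    coinvRel ρ ≤ LinearMap.ker (normMap ρ) := by
  rw [coinvRel, Submodule.span_le]
  rintro x ⟨⟨g, v⟩, rfl⟩
  have key : (normMap ρ) ((ρ g) v) = (normMap ρ) v := by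
    simp only [normMap, LinearMap.sum_apply]
    calc ∑ h : G, (ρ h) ((ρ g) v)
        = ∑ h : G, (ρ (h * g)) v := by
          refine Finset.sum_congr rfl fun h _ => ?_
          rw [map_mul]; rfl
      _ = ∑ h : G, (ρ h) v :=
          Fintype.sum_bijective (· * g) (Group.mulRight_bijective g) _ _ fun x => rfl
  simp only [SetLike.mem_coe, LinearMap.mem_ker, map_sub, key, sub_self]

/-- The norm map `ℤ ⊗_{ℤG} V → V`, `1 ⊗ v ↦ ∑ g • v`, induced on the coinvariants.  Its kernel
is the Tate homology group `Ĥ₀(G; V)` (the codomain restriction to the invariants `V^G` does not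
change the kernel). -/
noncomputable def normBar [Fintype G] (ρ : Representation ℤ G V) : Coinv ρ →ₗ[ℤ] V where
  toFun x := Submodule.liftQ (coinvRel ρ) (normMap ρ) (coinvRel_le ρ) x
  map_add' x y := map_add _ x y
  map_smul' n x := by
    simp only [RingHom.id_apply, map_zsmul]
    first
      | exact (int_smul_eq_zsmul _ n _).symm
      | exact (int_smul_eq_zsmul _ n _)

end Coinvariants

section SubQuot
variable {G : Type*} [Group G] {V : Type*} [AddCommGroup V] [Module ℤ V]

/-- The restriction of a representation to an invariant submodule. -/
def subRep (ρ : Representation ℤ G V) (p : Submodule ℤ V)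
    (hp : ∀ g : G, ∀ x ∈ p, ρ g x ∈ p) : Representation ℤ G p where
  toFun g := (ρ g).restrict (hp g)
  map_one' := by
    ext x
    simp [LinearMap.restrict_apply]
  map_mul' g h := by
    ext x
    simp [LinearMap.restrict_apply, map_mul]

/-- The representation induced on the quotient by an invariant submodule. -/
noncomputable def quotRep (ρ : Representation ℤ G V) (p : Submodule ℤ V)
    (hp : ∀ g : G, ∀ x ∈ p, ρ g x ∈ p) : Representation ℤ G (V ⧸ p) where
  toFun g := Submodule.mapQ p p (ρ g) (hp g)
  map_one' := by
    apply LinearMap.ext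
    intro x
    obtain ⟨v, rfl⟩ := Submodule.Quotient.mk_surjective p x
    simp [Submodule.mapQ_apply]
  map_mul' g h := by
    apply LinearMap.ext
    intro x
    obtain ⟨v, rfl⟩ := Submodule.Quotient.mk_surjective p x
    simp [Submodule.mapQ_apply, map_mul]

end SubQuot

section GroupRing
variable (G : Type*) [Group G]

/-- The left regular representation of `G` on the group ring `ℤG`. -/
noncomputable def regRep : Representation ℤ G (MonoidAlgebra ℤ G) where
  toFun g := LinearMap.mulLeft ℤ (MonoidAlgebra.of ℤ G g)
  map_one' := by
    apply LinearMap.ext; intro x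
    simp [MonoidAlgebra.of_apply, ← MonoidAlgebra.one_def]
  map_mul' g h := by
    apply LinearMap.ext; intro x
    simp only [MonoidAlgebra.of_apply, LinearMap.mulLeft_apply, Module.End.mul_apply]
    rw [← mul_assoc, MonoidAlgebra.single_mul_single, mul_one]

/-- The augmentation map `ε : ℤG → ℤ`. -/
noncomputable def aug : MonoidAlgebra ℤ G →ₐ[ℤ] ℤ := MonoidAlgebra.lift ℤ ℤ G 1

/-- The augmentation ideal `I = ker(ε : ℤG → ℤ)`. -/
noncomputable def augI : Ideal (MonoidAlgebra ℤ G) := RingHom.ker (aug G).toRingHom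

/-- The mod 2 augmentation map `ℤG → ℤ/2`. -/
noncomputable def aug2 : MonoidAlgebra ℤ G →+* ZMod 2 :=
  (Int.castRingHom (ZMod 2)).comp (aug G).toRingHom

/-- The ideal `(I, 2) = ker(ℤG → ℤ/2)` generated by the augmentation ideal and `2`. -/
noncomputable def I2 : Ideal (MonoidAlgebra ℤ G) := RingHom.ker (aug2 G)

/-- The norm element `N = ∑_{g ∈ G} g ∈ ℤG`. -/
noncomputable def Nelt [Fintype G] : MonoidAlgebra ℤ G := ∑ g : G, MonoidAlgebra.of ℤ G g

/-- The (left) ideal of `ℤG` generated by the norm element `N`; the quotient by it is `ℤG/N`. -/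
noncomputable def NIdeal [Fintype G] : Ideal (MonoidAlgebra ℤ G) := Ideal.span {Nelt G}

/-- The left ideal `(N, 2)` of `ℤG` generated by the norm element `N` and `2`. -/
noncomputable def N2 [Fintype G] : Ideal (MonoidAlgebra ℤ G) := Ideal.span {Nelt G, 2}

lemma aug_single (g : G) : aug G (MonoidAlgebra.single g 1) = 1 := by
  simp [aug, MonoidAlgebra.lift_single]

lemma of_sub_one_mem_augI (g : G) :
    MonoidAlgebra.of ℤ G g - 1 ∈ (augI G).restrictScalars ℤ := by
  simp [augI, RingHom.mem_ker, map_sub, aug_single]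

lemma of_sub_one_mem_I2 (g : G) :
    MonoidAlgebra.of ℤ G g - 1 ∈ (I2 G).restrictScalars ℤ := by
  simp [I2, aug2, RingHom.mem_ker, map_sub, aug_single]

lemma two_mem_I2 : (2 : MonoidAlgebra ℤ G) ∈ (I2 G).restrictScalars ℤ := by
  have : (aug2 G) 2 = 2 := by simp [map_ofNat]
  simp [I2, RingHom.mem_ker, this]
  decide

lemma N_mem_I2 [Fintype G] (h : Even (Fintype.card G)) :
    Nelt G ∈ (I2 G).restrictScalars ℤ := by
  have : (aug2 G) (Nelt G) = (Fintype.card G : ZMod 2) := by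
    simp [Nelt, map_sum, aug2, aug_single]
  simp only [Submodule.restrictScalars_mem, I2, RingHom.mem_ker, this]
  rw [ZMod.natCast_eq_zero_iff]
  exact h.two_dvd

lemma N_mem_N2 [Fintype G] : Nelt G ∈ (N2 G).restrictScalars ℤ :=
  Ideal.subset_span (by simp)

lemma two_mem_N2 [Fintype G] : (2 : MonoidAlgebra ℤ G) ∈ (N2 G).restrictScalars ℤ :=
  Ideal.subset_span (by simp)

lemma ideal_invariant (J : Ideal (MonoidAlgebra ℤ G)) :
    ∀ g : G, ∀ x ∈ J.restrictScalars ℤ, (regRep G) g x ∈ J.restrictScalars ℤ := by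
  intro g x hx
  exact J.mul_mem_left _ hx

/-- A (left) ideal of `ℤG`, regarded as a representation of `G`. -/
noncomputable def idealRep (J : Ideal (MonoidAlgebra ℤ G)) :
    Representation ℤ G ↥(J.restrictScalars ℤ) :=
  subRep (regRep G) (J.restrictScalars ℤ) (ideal_invariant G J)

/-- The quotient `ℤG/N` of `ℤG` by the ideal generated by the norm element, as a
representation of `G`. -/
noncomputable def quotNRep [Fintype G] :
    Representation ℤ G (MonoidAlgebra ℤ G ⧸ (NIdeal G).restrictScalars ℤ) :=
  quotRep (regRep G) ((NIdeal G).restrictScalars ℤ) (ideal_invariant G (NIdeal G))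

/-- `2` as an element of `(I,2)`. -/
noncomputable def twoI2 : ↥((I2 G).restrictScalars ℤ) := ⟨2, two_mem_I2 G⟩

/-- `g - 1` as an element of `(I,2)`. -/
noncomputable def gm1 (g : G) : ↥((I2 G).restrictScalars ℤ) :=
  ⟨MonoidAlgebra.of ℤ G g - 1, of_sub_one_mem_I2 G g⟩

/-- `g - 1` as an element of the augmentation ideal `I`. -/
noncomputable def gm1I (g : G) : ↥((augI G).restrictScalars ℤ) :=
  ⟨MonoidAlgebra.of ℤ G g - 1, of_sub_one_mem_augI G g⟩

/-- The norm element as an element of `(I,2)` (for `G` of even order). -/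
noncomputable def NeltI2 [Fintype G] (h : Even (Fintype.card G)) :
    ↥((I2 G).restrictScalars ℤ) := ⟨Nelt G, N_mem_I2 G h⟩

/-- The norm element as an element of `(N,2)`. -/
noncomputable def NeltN2 [Fintype G] : ↥((N2 G).restrictScalars ℤ) := ⟨Nelt G, N_mem_N2 G⟩

end GroupRing

/-! Since `N y = ε(y) N` in `ℤG`, the class of `x ∈ (I,2)` in the coinvariants lies in the kernel
of the norm exactly when `ε(x) = 0`. The linear map `ℤG → G^{ab} ⊗ ℤ/2`, `g ↦ ḡ ⊗ 1`, sends
`(g - 1) x` to `ε(x) (ḡ ⊗ 1)`, which vanishes for `x ∈ (I,2)` because `ε(x)` is even; so it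
descends to the coinvariants. Conversely `g ↦ [g - 1]` is a homomorphism into the coinvariants,
as `gh - 1 = g (h - 1) + (g - 1)`, and it is killed by `2`, as `2 (g - 1) = g · 2 - 2`; so it
factors through `G^{ab} ⊗ ℤ/2`. On the kernel of the norm the two maps are mutually inverse,
because an element with `ε(x) = 0` is `∑ c_h (h - 1)`. -/

section TensorZMod
variable {A B : Type*} [AddCommGroup A] [AddCommGroup B]

lemma exists_tmul_one_eq (n : ℕ) (x : A ⊗[ℤ] ZMod n) : ∃ a : A, a ⊗ₜ[ℤ] (1 : ZMod n) = x := by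
  induction x using TensorProduct.induction_on with
  | zero => exact ⟨0, TensorProduct.zero_tmul _ _⟩
  | tmul a c =>
    obtain ⟨k, rfl⟩ := ZMod.intCast_surjective c
    exact ⟨k • a, by rw [TensorProduct.smul_tmul, zsmul_one]⟩
  | add x y hx hy =>
    obtain ⟨a, rfl⟩ := hx
    obtain ⟨b, rfl⟩ := hy
    exact ⟨a + b, TensorProduct.add_tmul _ _ _⟩

noncomputable def tensorZModLift (n : ℕ) (f : A →+ B) (hf : ∀ a, n • f a = 0) :
    A ⊗[ℤ] ZMod n →+ B :=
  TensorProduct.liftAddHom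
    (ZMod.lift n ⟨zmultiplesHom (A →+ B) f, by ext a; simpa using hf a⟩).flip
    fun r a c => by
      rw [AddMonoidHom.flip_apply, AddMonoidHom.flip_apply, map_zsmul, map_zsmul]
      rfl

lemma tensorZModLift_tmul_one (n : ℕ) (f : A →+ B) (hf : ∀ a, n • f a = 0) (a : A) :
    tensorZModLift n f hf (a ⊗ₜ 1) = f a := by
  rw [tensorZModLift, TensorProduct.liftAddHom_tmul, AddMonoidHom.flip_apply, ← Int.cast_one,
    ZMod.lift_coe]
  simp

end TensorZMod

section Coinvariants
variable {G : Type*} [Group G] {V : Type*} [AddCommGroup V] [Module ℤ V]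

lemma coinv_mk_apply (ρ : Representation ℤ G V) (g : G) (v : V) :
    (Submodule.Quotient.mk (ρ g v) : Coinv ρ) = Submodule.Quotient.mk v :=
  (Submodule.Quotient.eq _).mpr (Submodule.subset_span ⟨(g, v), rfl⟩)

end Coinvariants

section GroupRing
variable {G : Type*} [Group G]

lemma aug_single' (g : G) (c : ℤ) : aug G (MonoidAlgebra.single g c) = c := by
  simp [aug, MonoidAlgebra.lift_single]

lemma aug_Nelt [Fintype G] : aug G (Nelt G) = Fintype.card G := by
  simp [Nelt, aug_single]

lemma Nelt_mul [Fintype G] (y : MonoidAlgebra ℤ G) : Nelt G * y = aug G y • Nelt G := by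
  induction y using MonoidAlgebra.induction_linear with
  | zero => simp
  | add x y hx hy => rw [mul_add, hx, hy, map_add, add_smul]
  | single h c =>
    rw [aug_single', Nelt, Finset.sum_mul, Finset.smul_sum]
    simp only [MonoidAlgebra.of_apply, MonoidAlgebra.single_mul_single, one_mul,
      MonoidAlgebra.smul_single', mul_one]
    exact Fintype.sum_bijective (· * h) (Group.mulRight_bijective h) _ _ fun _ => rfl

lemma Nelt_ne_zero [Fintype G] : Nelt G ≠ 0 := fun h => by
  simpa [h] using (aug_Nelt (G := G)).symm

lemma coe_idealRep_apply (J : Ideal (MonoidAlgebra ℤ G)) (g : G) (x : J.restrictScalars ℤ) :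
    (idealRep G J g x : MonoidAlgebra ℤ G) = MonoidAlgebra.of ℤ G g * x :=
  rfl

lemma coe_normMap_idealRep [Fintype G] (J : Ideal (MonoidAlgebra ℤ G))
    (x : J.restrictScalars ℤ) :
    (normMap (idealRep G J) x : MonoidAlgebra ℤ G) = Nelt G * x := by
  simp [normMap, Nelt, Finset.sum_mul, coe_idealRep_apply]

lemma normMap_idealRep_eq_zero_iff [Fintype G] (J : Ideal (MonoidAlgebra ℤ G))
    (x : J.restrictScalars ℤ) : normMap (idealRep G J) x = 0 ↔ aug G x = 0 := by
  rw [← Submodule.coe_eq_zero, coe_normMap_idealRep, Nelt_mul, smul_eq_zero]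
  simp [Nelt_ne_zero]

end GroupRing

section AbModTwo
variable {G : Type*} [Group G]

noncomputable def abModTwo (g : G) : Additive (Abelianization G) ⊗[ℤ] ZMod 2 :=
  Additive.ofMul (Abelianization.of g) ⊗ₜ 1

lemma exists_ofMul_of_eq (a : Additive (Abelianization G)) :
    ∃ g : G, Additive.ofMul (Abelianization.of g) = a :=
  QuotientGroup.mk_surjective a.toMul

lemma exists_abModTwo_eq (x : Additive (Abelianization G) ⊗[ℤ] ZMod 2) :
    ∃ g : G, abModTwo g = x := by
  obtain ⟨a, rfl⟩ := exists_tmul_one_eq 2 x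
  obtain ⟨g, rfl⟩ := exists_ofMul_of_eq a
  exact ⟨g, rfl⟩

lemma abModTwo_mul (g h : G) : abModTwo (g * h) = abModTwo g + abModTwo h := by
  simp [abModTwo, TensorProduct.add_tmul]

lemma abModTwo_one : abModTwo (1 : G) = 0 := by
  simp [abModTwo]

lemma two_zsmul_abModTwo (g : G) : (2 : ℤ) • abModTwo g = 0 := by
  rw [abModTwo, ← TensorProduct.tmul_smul, show (2 : ℤ) • (1 : ZMod 2) = 0 from rfl,
    TensorProduct.tmul_zero]

noncomputable def groupRingToAbModTwo :
    MonoidAlgebra ℤ G →ₗ[ℤ] Additive (Abelianization G) ⊗[ℤ] ZMod 2 :=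
  Finsupp.linearCombination ℤ abModTwo ∘ₗ (MonoidAlgebra.coeffLinearEquiv ℤ).toLinearMap

lemma groupRingToAbModTwo_single (g : G) (c : ℤ) :
    groupRingToAbModTwo (MonoidAlgebra.single g c) = c • abModTwo g :=
  Finsupp.linearCombination_single ℤ c g

lemma groupRingToAbModTwo_of_sub_one (g : G) :
    groupRingToAbModTwo (MonoidAlgebra.of ℤ G g - 1) = abModTwo g := by
  rw [map_sub, MonoidAlgebra.of_apply, MonoidAlgebra.one_def, groupRingToAbModTwo_single,
    groupRingToAbModTwo_single, abModTwo_one]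
  simp

lemma groupRingToAbModTwo_of_sub_one_mul (g : G) (y : MonoidAlgebra ℤ G) :
    groupRingToAbModTwo ((MonoidAlgebra.of ℤ G g - 1) * y) = aug G y • abModTwo g := by
  induction y using MonoidAlgebra.induction_linear with
  | zero => simp
  | add x y hx hy => rw [mul_add, map_add, hx, hy, map_add, add_smul]
  | single h c =>
    rw [sub_mul, one_mul, MonoidAlgebra.of_apply, MonoidAlgebra.single_mul_single, one_mul,
      map_sub, groupRingToAbModTwo_single, groupRingToAbModTwo_single, aug_single', abModTwo_mul,
      smul_add, add_sub_cancel_right]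

lemma coinvRel_le_ker_groupRingToAbModTwo :
    coinvRel (idealRep G (I2 G)) ≤
      LinearMap.ker (groupRingToAbModTwo ∘ₗ ((I2 G).restrictScalars ℤ).subtype) := by
  rw [coinvRel, Submodule.span_le]
  rintro _ ⟨⟨g, v⟩, rfl⟩
  obtain ⟨k, hk⟩ : (2 : ℤ) ∣ aug G v :=
    (ZMod.intCast_zmod_eq_zero_iff_dvd _ 2).mp (RingHom.mem_ker.mp v.2)
  have hv : (idealRep G (I2 G) g v - v : MonoidAlgebra ℤ G) =
      (MonoidAlgebra.of ℤ G g - 1) * v := by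
    rw [sub_mul, one_mul]; rfl
  simp only [SetLike.mem_coe, LinearMap.mem_ker, LinearMap.comp_apply, Submodule.coe_subtype,
    Submodule.coe_sub, hv, groupRingToAbModTwo_of_sub_one_mul, hk, mul_comm (2 : ℤ), mul_smul,
    two_zsmul_abModTwo, smul_zero]

noncomputable def coinvToAbModTwo :
    Coinv (idealRep G (I2 G)) →ₗ[ℤ] Additive (Abelianization G) ⊗[ℤ] ZMod 2 :=
  Submodule.liftQ _ _ coinvRel_le_ker_groupRingToAbModTwo

lemma coinvToAbModTwo_mk (x : (I2 G).restrictScalars ℤ) :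
    coinvToAbModTwo (Submodule.Quotient.mk x) = groupRingToAbModTwo (x : MonoidAlgebra ℤ G) :=
  rfl

end AbModTwo

section CoinvOfAb
variable {G : Type*} [Group G]

lemma gm1_mul (g h : G) : gm1 G (g * h) = idealRep G (I2 G) g (gm1 G h) + gm1 G g := by
  apply Subtype.ext
  simp only [gm1, Submodule.coe_add, coe_idealRep_apply, map_mul]
  noncomm_ring

lemma two_nsmul_gm1 (g : G) : 2 • gm1 G g = idealRep G (I2 G) g (twoI2 G) - twoI2 G := by
  apply Subtype.ext
  simp only [gm1, twoI2, AddSubmonoidClass.coe_nsmul, Submodule.coe_sub, coe_idealRep_apply]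
  rw [two_nsmul, mul_two, ← one_add_one_eq_two]
  abel

noncomputable def subOneHom : G →* Multiplicative (Coinv (idealRep G (I2 G))) where
  toFun g := .ofAdd (Submodule.Quotient.mk (gm1 G g))
  map_one' := by
    rw [← ofAdd_zero, ← Submodule.Quotient.mk_zero]
    congr 2
    apply Subtype.ext
    simp only [gm1, map_one, sub_self, Submodule.coe_zero]
  map_mul' g h := by
    rw [gm1_mul, Submodule.Quotient.mk_add, coinv_mk_apply, add_comm, ofAdd_add]

noncomputable def abToCoinv : Additive (Abelianization G) →+ Coinv (idealRep G (I2 G)) :=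
  MonoidHom.toAdditiveLeft (Abelianization.lift subOneHom)

lemma abToCoinv_ofMul_of (g : G) :
    abToCoinv (Additive.ofMul (Abelianization.of g)) = Submodule.Quotient.mk (gm1 G g) :=
  rfl

lemma two_nsmul_abToCoinv (a : Additive (Abelianization G)) : 2 • abToCoinv a = 0 := by
  obtain ⟨g, rfl⟩ := exists_ofMul_of_eq a
  rw [abToCoinv_ofMul_of, ← Submodule.Quotient.mk_smul, two_nsmul_gm1, Submodule.Quotient.mk_sub,
    coinv_mk_apply, sub_self]

noncomputable def abModTwoToCoinv :
    Additive (Abelianization G) ⊗[ℤ] ZMod 2 →+ Coinv (idealRep G (I2 G)) :=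
  tensorZModLift 2 abToCoinv two_nsmul_abToCoinv

lemma abModTwoToCoinv_abModTwo (g : G) :
    abModTwoToCoinv (abModTwo g) = Submodule.Quotient.mk (gm1 G g) :=
  tensorZModLift_tmul_one 2 _ _ _

noncomputable def augSub : MonoidAlgebra ℤ G →ₗ[ℤ] (I2 G).restrictScalars ℤ :=
  LinearMap.codRestrict _ (LinearMap.id - Algebra.linearMap ℤ _ ∘ₗ (aug G).toLinearMap)
    fun y => by simp [I2, aug2, RingHom.mem_ker]

lemma coe_augSub (y : MonoidAlgebra ℤ G) :
    (augSub y : MonoidAlgebra ℤ G) = y - algebraMap ℤ _ (aug G y) :=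
  rfl

lemma abModTwoToCoinv_groupRingToAbModTwo (y : MonoidAlgebra ℤ G) :
    abModTwoToCoinv (groupRingToAbModTwo y) = Submodule.Quotient.mk (augSub y) := by
  induction y using MonoidAlgebra.induction_linear with
  | zero => simp
  | add x y hx hy => rw [map_add, map_add, hx, hy, map_add, Submodule.Quotient.mk_add]
  | single h c =>
    have : augSub (MonoidAlgebra.single h c) = c • gm1 G h := by
      apply Subtype.ext
      simp [coe_augSub, gm1, aug_single', MonoidAlgebra.of_apply, smul_sub]
    rw [groupRingToAbModTwo_single, map_zsmul, abModTwoToCoinv_abModTwo, this,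
      Submodule.Quotient.mk_smul]

end CoinvOfAb

section Equiv
variable {G : Type*} [Group G] [Fintype G]

lemma mk_mem_ker_normBar_iff (J : Ideal (MonoidAlgebra ℤ G)) (x : J.restrictScalars ℤ) :
    (Submodule.Quotient.mk x : Coinv (idealRep G J)) ∈ LinearMap.ker (normBar (idealRep G J)) ↔
      aug G x = 0 :=
  normMap_idealRep_eq_zero_iff J x

lemma abModTwoToCoinv_mem_ker (x : Additive (Abelianization G) ⊗[ℤ] ZMod 2) :
    abModTwoToCoinv x ∈ LinearMap.ker (normBar (idealRep G (I2 G))) := by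
  obtain ⟨g, rfl⟩ := exists_abModTwo_eq x
  rw [abModTwoToCoinv_abModTwo, mk_mem_ker_normBar_iff]
  simp [gm1, MonoidAlgebra.of_apply, aug_single]

noncomputable def abModTwoEquivKerNormBar :
    Additive (Abelianization G) ⊗[ℤ] ZMod 2 ≃+ LinearMap.ker (normBar (idealRep G (I2 G))) where
  toFun x := ⟨abModTwoToCoinv x, abModTwoToCoinv_mem_ker x⟩
  invFun q := coinvToAbModTwo q
  left_inv x := by
    obtain ⟨g, rfl⟩ := exists_abModTwo_eq x
    show coinvToAbModTwo (abModTwoToCoinv (abModTwo g)) = abModTwo g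
    rw [abModTwoToCoinv_abModTwo, coinvToAbModTwo_mk]
    exact groupRingToAbModTwo_of_sub_one g
  right_inv := by
    rintro ⟨q, hq⟩
    induction q using Submodule.Quotient.induction_on with | _ x
    have hx : augSub (x : MonoidAlgebra ℤ G) = x := by
      apply Subtype.ext
      rw [coe_augSub, (mk_mem_ker_normBar_iff _ x).mp hq, map_zero, sub_zero]
    apply Subtype.ext
    simp only [coinvToAbModTwo_mk, abModTwoToCoinv_groupRingToAbModTwo, hx]
  map_add' x y := Subtype.ext (map_add abModTwoToCoinv x y)

end Equiv

/-- For a finite group `G`, the Tate homology group `Ĥ₀(G; (I,2))` (the kernel of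
the norm map on the coinvariants) is isomorphic to `G^{ab} ⊗_ℤ ℤ/2`, via the map sending
`g ⊗ 1` to the class of `g - 1`. -/
theorem stmt8 {G : Type*} [Group G] [Fintype G] :
    ∃ e : (Additive (Abelianization G)) ⊗[ℤ] (ZMod 2) ≃+
        ↥(LinearMap.ker (normBar (idealRep G (I2 G)))),
      ∀ g : G,
        ((e ((Additive.ofMul (Abelianization.of g)) ⊗ₜ[ℤ] (1 : ZMod 2)) :
            ↥(LinearMap.ker (normBar (idealRep G (I2 G))))) :
          Coinv (idealRep G (I2 G))) = Submodule.Quotient.mk (gm1 G g) :=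
  ⟨abModTwoEquivKerNormBar, abModTwoToCoinv_abModTwo⟩
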